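/- arXiv:2112.11901 — 2 statements merged into one kernel-verified Lean document; each statement's English description precedes it below -/
import Mathlib

section
/- Persistent Schanuel's lemma (Lemma 3.1). Let ε ≥ 0, let M, N : R^n → vec be persistence modules, and let 0 → K → P → M → 0 and 0 → L → Q → N → 0 be short exact sequences of persistence modules (exact pointwise), with P and Q projective objects of the category of persistence modules. If M and N are ε-interleaved, then P ⊕ L[ε] and K[ε] ⊕ Q are ε-interleaved. -/
set_option linter.unusedVariables false
set_option maxHeartbeats 800000

open scoped Classical ENNReal

noncomputable section

/-- Points of `R^n`. The metric on `Fin n → ℝ` is the sup-metric, so `dist` is `‖·‖_∞`. -/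
abbrev Pt (n : ℕ) := Fin n → ℝ

/-- An `n`-parameter persistence module: a functor from the poset `R^n`
to finite-dimensional `k`-vector spaces. -/
structure PersMod (k : Type) [Field k] (n : ℕ) where
  X : Pt n → Type
  [acg : ∀ r, AddCommGroup (X r)]
  [mod : ∀ r, Module k (X r)]
  [fd : ∀ r, FiniteDimensional k (X r)]
  map : ∀ {r s : Pt n}, r ≤ s → (X r →ₗ[k] X s)
  map_id : ∀ r : Pt n, map (le_refl r) = LinearMap.id
  map_comp : ∀ {r s t : Pt n} (h₁ : r ≤ s) (h₂ : s ≤ t),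
    (map h₂).comp (map h₁) = map (h₁.trans h₂)

attribute [instance] PersMod.acg PersMod.mod PersMod.fd

variable {k : Type} [Field k] {n : ℕ}

/-- A morphism of persistence modules: a natural transformation. -/
structure PersHom (M N : PersMod k n) where
  app : ∀ r, M.X r →ₗ[k] N.X r
  natural : ∀ {r s : Pt n} (h : r ≤ s),
    (N.map h).comp (app r) = (app s).comp (M.map h)

def shiftPt (ε : ℝ) (r : Pt n) : Pt n := fun i => r i + ε

lemma shiftPt_mono {ε : ℝ} {r s : Pt n} (h : r ≤ s) : shiftPt ε r ≤ shiftPt ε s :=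
  fun i => add_le_add (h i) le_rfl

lemma le_shiftPt {ε : ℝ} (hε : 0 ≤ ε) (r : Pt n) : r ≤ shiftPt ε r :=
  fun i => le_add_of_nonneg_right hε

/-- The `ε`-shift of a persistence module. -/
def PersMod.shift (M : PersMod k n) (ε : ℝ) : PersMod k n where
  X r := M.X (shiftPt ε r)
  map h := M.map (shiftPt_mono h)
  map_id r := M.map_id _
  map_comp h₁ h₂ := M.map_comp _ _

/-- `M` and `N` are `ε`-interleaved. -/
def Interleaved (ε : ℝ) (M N : PersMod k n) : Prop :=
  ∃ hε : 0 ≤ ε,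
  ∃ (f : PersHom M (N.shift ε)) (g : PersHom N (M.shift ε)),
    (∀ r : Pt n, (g.app (shiftPt ε r)).comp (f.app r)
        = M.map ((le_shiftPt hε r).trans (le_shiftPt hε _))) ∧
    (∀ r : Pt n, (f.app (shiftPt ε r)).comp (g.app r)
        = N.map ((le_shiftPt hε r).trans (le_shiftPt hε _)))

/-- The interleaving distance. -/
def interleavingDist (M N : PersMod k n) : ℝ≥0∞ :=
  sInf { e : ℝ≥0∞ | ∃ ε : ℝ, e = ENNReal.ofReal ε ∧ Interleaved ε M N }

/-- The free persistence module `⊕_i F_{L i}`, where `F_j` is the "upset" interval module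
generated at `j`. -/
def freeModFin {m : ℕ} (L : Fin m → Pt n) : PersMod k n where
  X r := {i : Fin m // L i ≤ r} → k
  map {r s} h :=
    { toFun := fun f i => if h' : L i.1 ≤ r then f ⟨i.1, h'⟩ else 0
      map_add' := by
        intro f g; funext i
        by_cases h' : L i.1 ≤ r <;> simp [h']
      map_smul' := by
        intro c f; funext i
        by_cases h' : L i.1 ≤ r <;> simp [h'] }
  map_id r := by
    apply LinearMap.ext; intro f; funext i
    show (if h' : L i.1 ≤ r then f ⟨i.1, h'⟩ else 0) = f i
    rw [dif_pos i.2]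
  map_comp {r s t} h₁ h₂ := by
    apply LinearMap.ext; intro f; funext i
    show (if hs : L i.1 ≤ s then
            (if hr : L i.1 ≤ r then f ⟨i.1, hr⟩ else 0) else 0)
        = (if hr : L i.1 ≤ r then f ⟨i.1, hr⟩ else 0)
    by_cases hr : L i.1 ≤ r
    · simp [hr, hr.trans h₁]
    · simp [hr]

/-- Isomorphism of persistence modules. -/
def PersIso (M N : PersMod k n) : Prop :=
  ∃ (f : PersHom M N) (g : PersHom N M),
    (∀ r, (g.app r).comp (f.app r) = LinearMap.id) ∧
    (∀ r, (f.app r).comp (g.app r) = LinearMap.id)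

/-- `P` is free of finite rank with barcode `B`. -/
def IsFreeWith (P : PersMod k n) (B : Multiset (Pt n)) : Prop :=
  ∃ (m : ℕ) (L : Fin m → Pt n), B = (List.ofFn L : Multiset (Pt n)) ∧ PersIso P (freeModFin L)

/-- `M` is finitely presentable: it is (isomorphic to) the cokernel of a morphism
between free modules of finite rank. -/
def FinitelyPresentable (M : PersMod k n) : Prop :=
  ∃ (c r : ℕ) (Lc : Fin c → Pt n) (Lr : Fin r → Pt n)
    (f : PersHom (freeModFin Lc) (freeModFin Lr)) (g : PersHom (freeModFin Lr) M),
    (∀ x, Function.Surjective (g.app x)) ∧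
    (∀ x, LinearMap.range (f.app x) = LinearMap.ker (g.app x))

/-- A resolution of `M` of length `len`:
an exact sequence `0 → P_len → ⋯ → P_0 → M → 0` (encoded with `P j = 0` for `j > len`). -/
structure Res (M : PersMod k n) where
  len : ℕ
  P : ℕ → PersMod k n
  d : ∀ j : ℕ, PersHom (P (j + 1)) (P j)
  aug : PersHom (P 0) M
  aug_surj : ∀ r, Function.Surjective (aug.app r)
  exact_zero : ∀ r, LinearMap.range ((d 0).app r) = LinearMap.ker (aug.app r)
  exact_succ : ∀ (j : ℕ) (r), LinearMap.range ((d (j + 1)).app r) = LinearMap.ker ((d j).app r)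
  vanish : ∀ j, len < j → ∀ r, ∀ x : (P j).X r, x = 0

/-- Projectivity in the category of persistence modules
(where epimorphisms are the pointwise surjections). -/
def IsProjectiveMod (P : PersMod k n) : Prop :=
  ∀ (A B : PersMod k n) (e : PersHom A B), (∀ r, Function.Surjective (e.app r)) →
    ∀ f : PersHom P B, ∃ g : PersHom P A, ∀ r, (e.app r).comp (g.app r) = f.app r

/-- An `ε`-bijection between two multisets of points of `R^n`. -/
def IsMatching (ε : ℝ) (B C : Multiset (Pt n)) : Prop :=
  ∃ m : Multiset (Pt n × Pt n),
    m.map Prod.fst = B ∧ m.map Prod.snd = C ∧ ∀ p ∈ m, dist p.1 p.2 ≤ ε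

/-- The bottleneck distance between barcodes. -/
def bottleneckDist (B C : Multiset (Pt n)) : ℝ≥0∞ :=
  sInf { e : ℝ≥0∞ | ∃ ε : ℝ, 0 ≤ ε ∧ e = ENNReal.ofReal ε ∧ IsMatching ε B C }

/-- A signed barcode: a pair (positive part, negative part) of barcodes. -/
abbrev SignedBarcode (n : ℕ) := Multiset (Pt n) × Multiset (Pt n)

/-- The bottleneck dissimilarity on signed barcodes. -/
def dBhat (B C : SignedBarcode n) : ℝ≥0∞ :=
  bottleneckDist (B.1 + C.2) (C.1 + B.2)

/-- Binary direct sum of persistence modules. -/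
def PersMod.dsum (M N : PersMod k n) : PersMod k n where
  X r := M.X r × N.X r
  map h := (M.map h).prodMap (N.map h)
  map_id r := by
    apply LinearMap.ext; intro x
    show (M.map (le_refl r) x.1, N.map (le_refl r) x.2) = x
    rw [M.map_id, N.map_id]; rfl
  map_comp {r s t} h₁ h₂ := by
    apply LinearMap.ext; intro x
    show (M.map h₂ (M.map h₁ x.1), N.map h₂ (N.map h₁ x.2))
        = (M.map (h₁.trans h₂) x.1, N.map (h₁.trans h₂) x.2)
    rw [← M.map_comp h₁ h₂, ← N.map_comp h₁ h₂]; rfl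

/-- Finite direct sum of persistence modules. -/
def dsumFin {m : ℕ} (P : Fin m → PersMod k n) : PersMod k n where
  X r := ∀ j, (P j).X r
  map h := LinearMap.pi fun j => ((P j).map h).comp (LinearMap.proj j)
  map_id r := by
    apply LinearMap.ext; intro x; funext j
    show (P j).map (le_refl r) (x j) = x j
    rw [(P j).map_id]; rfl
  map_comp {r s t} h₁ h₂ := by
    apply LinearMap.ext; intro x; funext j
    show (P j).map h₂ ((P j).map h₁ (x j)) = (P j).map (h₁.trans h₂) (x j)
    rw [← (P j).map_comp h₁ h₂]; rfl

/-- The zero persistence module. -/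
def zeroMod : PersMod k n := freeModFin (fun i : Fin 0 => i.elim0)

/-- The Hilbert function of a persistence module. -/
def Hil (M : PersMod k n) (r : Pt n) : ℕ := Module.finrank k (M.X r)

/-- Number of points of `B` (with multiplicity) that are `≤ r`. -/
def countLe (B : Multiset (Pt n)) (r : Pt n) : ℕ := Multiset.card (B.filter (fun i => i ≤ r))

/-- `R` is a free resolution of `M` with barcodes `B j`. -/
def IsFreeRes {M : PersMod k n} (R : Res M) (B : ℕ → Multiset (Pt n)) : Prop :=
  ∀ j, IsFreeWith (R.P j) (B j)

/-- `R` is a minimal free resolution of `M` with barcodes `B j`: in every homological degree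
its term has minimal rank among all free resolutions of `M`. -/
def IsMinFreeRes {M : PersMod k n} (R : Res M) (B : ℕ → Multiset (Pt n)) : Prop :=
  IsFreeRes R B ∧
  ∀ (R' : Res M) (B' : ℕ → Multiset (Pt n)), IsFreeRes R' B' →
    ∀ j, Multiset.card (B j) ≤ Multiset.card (B' j)

/-- Multiset union of the `B j` over even `j ≤ ℓ`. -/
def evenPart (B : ℕ → Multiset (Pt n)) (ℓ : ℕ) : Multiset (Pt n) :=
  ∑ j ∈ Finset.range (ℓ + 1), if Even j then B j else 0

/-- Multiset union of the `B j` over odd `j ≤ ℓ`. -/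
def oddPart (B : ℕ → Multiset (Pt n)) (ℓ : ℕ) : Multiset (Pt n) :=
  ∑ j ∈ Finset.range (ℓ + 1), if ¬ Even j then B j else 0

/-- `S` is the Betti signed barcode of `M`: the pair (even Betti numbers, odd Betti numbers)
coming from a minimal free resolution of `M`. -/
def IsBettiOf (M : PersMod k n) (S : SignedBarcode n) : Prop :=
  ∃ (R : Res M) (B : ℕ → Multiset (Pt n)), IsMinFreeRes R B ∧
    S = (evenPart B R.len, oddPart B R.len)

/-- `(P, Q)` (with barcodes `BP`, `BQ`) is a minimal Hilbert decomposition of `η`. -/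
def IsMinHilbDecomp (η : Pt n → ℤ) (P Q : PersMod k n) (BP BQ : Multiset (Pt n)) : Prop :=
  IsFreeWith P BP ∧ IsFreeWith Q BQ ∧
  (∀ r, η r = (Hil P r : ℤ) - (Hil Q r : ℤ)) ∧
  ∀ x : Pt n, ¬ (x ∈ BP ∧ x ∈ BQ)

/-- The `ℓ¹`-distance on `R^n`. -/
def l1dist (x y : Pt n) : ℝ := ∑ i, |x i - y i|

/-- The 1-Wasserstein cost of a matching (encoded as a multiset of pairs). -/
def matchCost (m : Multiset (Pt n × Pt n)) : ℝ := (m.map fun p => l1dist p.1 p.2).sum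

/-- The 1-Wasserstein distance between barcodes. -/
def wassDist (B C : Multiset (Pt n)) : ℝ≥0∞ :=
  sInf { e : ℝ≥0∞ | ∃ m : Multiset (Pt n × Pt n),
    m.map Prod.fst = B ∧ m.map Prod.snd = C ∧ e = ENNReal.ofReal (matchCost m) }

/-- The signed 1-Wasserstein distance on signed barcodes. -/
def dW1hat (B C : SignedBarcode n) : ℝ≥0∞ := wassDist (B.1 + C.2) (C.1 + B.2)

/-- The reduction of a signed barcode: cancel common points with multiplicity. -/
def reduceSB (B : SignedBarcode n) : SignedBarcode n := (B.1 - B.2, B.2 - B.1)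

/-
For an interleaving `(f, g)` of `M` and `N`, lift `f ∘ p` and `g ∘ q` through the pointwise
surjections `q[ε]` and `p[ε]` to `α : P → Q[ε]` and `β : Q → P[ε]` (projectivity). Since `g[ε] ∘ f` and `f[ε] ∘ g` are the
structure maps `ι_{2ε}`, the defects `ι_{2ε} - β[ε] ∘ α` and `ι_{2ε} - α[ε] ∘ β` are killed by
`p[2ε]` and `q[2ε]`, so they factor as `i[2ε] ∘ d` and `j[2ε] ∘ c`; likewise `α ∘ i = j[ε] ∘ κ`
and `β ∘ j = i[ε] ∘ μ`. The block matrices `[[d, μ[ε]], [α, -j[ε]]] : P ⊕ L[ε] → (K[ε] ⊕ Q)[ε]`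
and `[[i[ε], β], [κ[ε], -c]] : K[ε] ⊕ Q → (P ⊕ L[ε])[ε]` are then an `ε`-interleaving: the
entries of the two products are computed from these equations, cancelling the monomorphisms
`i` and `j` where needed.
-/

namespace PersHom

variable {A B C D E F : PersMod k n}

@[ext]
lemma ext {f g : PersHom A B} (h : ∀ r, f.app r = g.app r) : f = g := by
  cases f; cases g; congr; exact funext h

lemma map_app (f : PersHom A B) {r s : Pt n} (h : r ≤ s) (x : A.X r) :
    B.map h (f.app r x) = f.app s (A.map h x) :=
  LinearMap.congr_fun (f.natural h) x

def comp (g : PersHom B C) (f : PersHom A B) : PersHom A C where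
  app r := (g.app r).comp (f.app r)
  natural h := by
    rw [← LinearMap.comp_assoc, g.natural, LinearMap.comp_assoc, f.natural,
      LinearMap.comp_assoc]

lemma comp_assoc (h : PersHom C D) (g : PersHom B C) (f : PersHom A B) :
    (h.comp g).comp f = h.comp (g.comp f) := rfl

instance : Zero (PersHom A B) :=
  ⟨⟨fun _ => 0, fun _ => by rw [LinearMap.comp_zero, LinearMap.zero_comp]⟩⟩

instance : Add (PersHom A B) :=
  ⟨fun f g => ⟨fun r => f.app r + g.app r, fun h => by
    rw [LinearMap.comp_add, LinearMap.add_comp, f.natural, g.natural]⟩⟩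

instance : Neg (PersHom A B) :=
  ⟨fun f => ⟨fun r => -f.app r, fun h => by
    rw [LinearMap.comp_neg, LinearMap.neg_comp, f.natural]⟩⟩

instance : Sub (PersHom A B) :=
  ⟨fun f g => ⟨fun r => f.app r - g.app r, fun h => by
    rw [LinearMap.comp_sub, LinearMap.sub_comp, f.natural, g.natural]⟩⟩

instance : SMul ℕ (PersHom A B) :=
  ⟨fun m f => ⟨fun r => m • f.app r, fun h => by
    rw [LinearMap.comp_smul, LinearMap.smul_comp, f.natural]⟩⟩

instance : SMul ℤ (PersHom A B) :=
  ⟨fun m f => ⟨fun r => m • f.app r, fun h => by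
    rw [LinearMap.comp_smul, LinearMap.smul_comp, f.natural]⟩⟩

instance : AddCommGroup (PersHom A B) :=
  Function.Injective.addCommGroup PersHom.app (fun _ _ h => ext (congrFun h)) rfl
    (fun _ _ => rfl) (fun _ => rfl) (fun _ _ => rfl) (fun _ _ => rfl) (fun _ _ => rfl)

lemma comp_add (g : PersHom B C) (f₁ f₂ : PersHom A B) :
    g.comp (f₁ + f₂) = g.comp f₁ + g.comp f₂ :=
  ext fun _ => LinearMap.comp_add _ _ _

lemma comp_sub (g : PersHom B C) (f₁ f₂ : PersHom A B) :
    g.comp (f₁ - f₂) = g.comp f₁ - g.comp f₂ :=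
  ext fun _ => LinearMap.comp_sub _ _ _

lemma sub_comp (g₁ g₂ : PersHom B C) (f : PersHom A B) :
    (g₁ - g₂).comp f = g₁.comp f - g₂.comp f :=
  ext fun _ => LinearMap.sub_comp _ _ _

lemma comp_neg (g : PersHom B C) (f : PersHom A B) : g.comp (-f) = -g.comp f :=
  ext fun _ => LinearMap.comp_neg _ _

lemma neg_comp (g : PersHom B C) (f : PersHom A B) : (-g).comp f = -g.comp f :=
  ext fun _ => LinearMap.neg_comp _ _

lemma comp_zero (g : PersHom B C) : g.comp (0 : PersHom A B) = 0 :=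
  ext fun _ => LinearMap.comp_zero _

lemma cancel_left {i : PersHom C D} (hi : ∀ r, Function.Injective (i.app r))
    {f g : PersHom A C} (h : i.comp f = i.comp g) : f = g :=
  ext fun r => (hi r).injective_linearMapComp_left (congrArg (PersHom.app · r) h)

def shift (f : PersHom A B) (ε : ℝ) : PersHom (A.shift ε) (B.shift ε) where
  app r := f.app (shiftPt ε r)
  natural h := f.natural (shiftPt_mono h)

section Shift

variable (ε : ℝ)

lemma shift_comp (g : PersHom B C) (f : PersHom A B) :
    (g.comp f).shift ε = (g.shift ε).comp (f.shift ε) := rfl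

lemma shift_add (f g : PersHom A B) : (f + g).shift ε = f.shift ε + g.shift ε := rfl

lemma shift_neg (f : PersHom A B) : (-f).shift ε = -f.shift ε := rfl

lemma shift_sub (f g : PersHom A B) : (f - g).shift ε = f.shift ε - g.shift ε := rfl

end Shift

def matrix (a : PersHom A C) (b : PersHom B C) (c : PersHom A D) (d : PersHom B D) :
    PersHom (A.dsum B) (C.dsum D) where
  app r := ((a.app r).coprod (b.app r)).prod ((c.app r).coprod (d.app r))
  natural h := LinearMap.ext fun ⟨x, y⟩ => Prod.ext
    (show C.map h (a.app _ x + b.app _ y) = a.app _ (A.map h x) + b.app _ (B.map h y) by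
      rw [map_add, a.map_app, b.map_app])
    (show D.map h (c.app _ x + d.app _ y) = c.app _ (A.map h x) + d.app _ (B.map h y) by
      rw [map_add, c.map_app, d.map_app])

lemma matrix_comp_matrix (a : PersHom A C) (b : PersHom B C) (c : PersHom A D) (d : PersHom B D)
    (a' : PersHom C E) (b' : PersHom D E) (c' : PersHom C F) (d' : PersHom D F) :
    (matrix a' b' c' d').comp (matrix a b c d) =
      matrix (a'.comp a + b'.comp c) (a'.comp b + b'.comp d)
        (c'.comp a + d'.comp c) (c'.comp b + d'.comp d) := by
  ext r p
  refine Prod.ext ?_ ?_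
  · show a'.app r (a.app r p.1 + b.app r p.2) + b'.app r (c.app r p.1 + d.app r p.2) =
      (a'.app r (a.app r p.1) + b'.app r (c.app r p.1)) +
        (a'.app r (b.app r p.2) + b'.app r (d.app r p.2))
    rw [map_add, map_add]
    abel
  · show c'.app r (a.app r p.1 + b.app r p.2) + d'.app r (c.app r p.1 + d.app r p.2) =
      (c'.app r (a.app r p.1) + d'.app r (c.app r p.1)) +
        (c'.app r (b.app r p.2) + d'.app r (d.app r p.2))
    rw [map_add, map_add]
    abel

end PersHom

section ShiftHom

variable {ε : ℝ} (hε : 0 ≤ ε)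

/-- `ι_{2ε}`, with `M[2ε]` realised as `M[ε][ε]`, the form in which `Interleaved` is stated. -/
def PersMod.shiftHom₂ (M : PersMod k n) : PersHom M ((M.shift ε).shift ε) where
  app r := M.map ((le_shiftPt hε r).trans (le_shiftPt hε _))
  natural _ := (M.map_comp _ _).trans (M.map_comp _ _).symm

lemma PersMod.shiftHom₂_shift (M : PersMod k n) :
    (M.shift ε).shiftHom₂ hε = (M.shiftHom₂ hε).shift ε := rfl

lemma PersMod.dsum_shiftHom₂ (A B : PersMod k n) :
    (A.dsum B).shiftHom₂ hε = PersHom.matrix (A.shiftHom₂ hε) 0 0 (B.shiftHom₂ hε) := by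
  ext r p
  show (_, _) = ((A.shiftHom₂ hε).app r p.1 + 0, 0 + (B.shiftHom₂ hε).app r p.2)
  rw [add_zero, zero_add]
  rfl

lemma PersHom.shift_shift_comp_shiftHom₂ {A B : PersMod k n} (f : PersHom A B) :
    ((f.shift ε).shift ε).comp (A.shiftHom₂ hε) = (B.shiftHom₂ hε).comp f :=
  PersHom.ext fun _ => (f.natural _).symm

end ShiftHom

lemma interleaved_iff {ε : ℝ} {M N : PersMod k n} :
    Interleaved ε M N ↔ ∃ (hε : 0 ≤ ε) (f : PersHom M (N.shift ε)) (g : PersHom N (M.shift ε)),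
      (g.shift ε).comp f = M.shiftHom₂ hε ∧ (f.shift ε).comp g = N.shiftHom₂ hε := by
  simp only [Interleaved, PersHom.ext_iff]
  rfl

lemma interleaved_dsum_of_blocks {ε : ℝ} {A B C D : PersMod k n} (hε : 0 ≤ ε)
    {a : PersHom A (C.shift ε)} {b : PersHom B (C.shift ε)}
    {c : PersHom A (D.shift ε)} {d : PersHom B (D.shift ε)}
    {a' : PersHom C (A.shift ε)} {b' : PersHom D (A.shift ε)}
    {c' : PersHom C (B.shift ε)} {d' : PersHom D (B.shift ε)}
    (h₁ : (a'.shift ε).comp a + (b'.shift ε).comp c = A.shiftHom₂ hε)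
    (h₂ : (a'.shift ε).comp b + (b'.shift ε).comp d = 0)
    (h₃ : (c'.shift ε).comp a + (d'.shift ε).comp c = 0)
    (h₄ : (c'.shift ε).comp b + (d'.shift ε).comp d = B.shiftHom₂ hε)
    (h₅ : (a.shift ε).comp a' + (b.shift ε).comp c' = C.shiftHom₂ hε)
    (h₆ : (a.shift ε).comp b' + (b.shift ε).comp d' = 0)
    (h₇ : (c.shift ε).comp a' + (d.shift ε).comp c' = 0)
    (h₈ : (c.shift ε).comp b' + (d.shift ε).comp d' = D.shiftHom₂ hε) :
    Interleaved ε (A.dsum B) (C.dsum D) := by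
  refine interleaved_iff.mpr ⟨hε, PersHom.matrix a b c d, PersHom.matrix a' b' c' d', ?_, ?_⟩
  · refine (PersHom.matrix_comp_matrix a b c d (a'.shift ε) (b'.shift ε) (c'.shift ε)
      (d'.shift ε)).trans ?_
    rw [h₁, h₂, h₃, h₄]
    exact (PersMod.dsum_shiftHom₂ hε A B).symm
  · refine (PersHom.matrix_comp_matrix a' b' c' d' (a.shift ε) (b.shift ε) (c.shift ε)
      (d.shift ε)).trans ?_
    rw [h₅, h₆, h₇, h₈]
    exact (PersMod.dsum_shiftHom₂ hε C D).symm

structure IsShortExact {K P M : PersMod k n} (i : PersHom K P) (p : PersHom P M) : Prop where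
  injective : ∀ r, Function.Injective (i.app r)
  surjective : ∀ r, Function.Surjective (p.app r)
  range_eq_ker : ∀ r, LinearMap.range (i.app r) = LinearMap.ker (p.app r)

namespace IsShortExact

variable {A K P M : PersMod k n} {i : PersHom K P} {p : PersHom P M}

lemma shift (hs : IsShortExact i p) (ε : ℝ) : IsShortExact (i.shift ε) (p.shift ε) :=
  ⟨fun _ => hs.injective _, fun _ => hs.surjective _, fun _ => hs.range_eq_ker _⟩

lemma comp_eq_zero (hs : IsShortExact i p) : p.comp i = 0 :=
  PersHom.ext fun r => LinearMap.range_le_ker_iff.mp (hs.range_eq_ker r).le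

lemma exists_comp_eq (hs : IsShortExact i p) {h : PersHom A P} (hh : p.comp h = 0) :
    ∃ δ : PersHom A K, i.comp δ = h := by
  have hmem : ∀ r x, h.app r x ∈ LinearMap.range (i.app r) := fun r x => by
    rw [hs.range_eq_ker]
    exact LinearMap.congr_fun (congrArg (PersHom.app · r) hh) x
  let δ : ∀ r, A.X r →ₗ[k] K.X r := fun r =>
    (LinearEquiv.ofInjective _ (hs.injective r)).symm.toLinearMap ∘ₗ
      (h.app r).codRestrict _ (hmem r)
  have hδ : ∀ r, (i.app r).comp (δ r) = h.app r := fun r => LinearMap.ext fun x => by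
    simp [δ]
  refine ⟨⟨δ, fun {r s} hrs => (hs.injective s).injective_linearMapComp_left ?_⟩, PersHom.ext hδ⟩
  show (i.app s).comp ((K.map hrs).comp (δ r)) = (i.app s).comp ((δ s).comp (A.map hrs))
  rw [← LinearMap.comp_assoc, ← i.natural, LinearMap.comp_assoc, hδ, h.natural,
    ← LinearMap.comp_assoc, hδ]

end IsShortExact

lemma IsProjectiveMod.exists_comp_eq {P A B : PersMod k n} (hP : IsProjectiveMod P)
    (e : PersHom A B) (he : ∀ r, Function.Surjective (e.app r)) (f : PersHom P B) :
    ∃ g : PersHom P A, e.comp g = f :=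
  (hP A B e he f).imp fun _ hg => PersHom.ext hg

open PersHom

section Schanuel

variable {ε : ℝ} (hε : 0 ≤ ε) {M N P Q K L : PersMod k n}

lemma comp_shiftHom₂_sub_comp_eq_zero {p : PersHom P M} {q : PersHom Q N}
    {f : PersHom M (N.shift ε)} {g : PersHom N (M.shift ε)}
    {α : PersHom P (Q.shift ε)} {β : PersHom Q (P.shift ε)}
    (hgf : (g.shift ε).comp f = M.shiftHom₂ hε)
    (hα : (q.shift ε).comp α = f.comp p) (hβ : (p.shift ε).comp β = g.comp q) :
    ((p.shift ε).shift ε).comp (P.shiftHom₂ hε - (β.shift ε).comp α) = 0 := by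
  rw [comp_sub, shift_shift_comp_shiftHom₂, sub_eq_zero]
  calc (M.shiftHom₂ hε).comp p = ((g.shift ε).comp f).comp p := by rw [hgf]
    _ = (((p.shift ε).comp β).shift ε).comp α := by rw [hβ, comp_assoc, ← hα]; rfl

variable {i : PersHom K P} {j : PersHom L Q} {α : PersHom P (Q.shift ε)}
  {β : PersHom Q (P.shift ε)} {κ : PersHom K (L.shift ε)} {c : PersHom Q ((L.shift ε).shift ε)}

lemma shift_shift_comp_eq_shift_comp (hj : ∀ r, Function.Injective (j.app r))
    {d : PersHom P ((K.shift ε).shift ε)} (hκ : (j.shift ε).comp κ = α.comp i)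
    (hd : ((i.shift ε).shift ε).comp d = P.shiftHom₂ hε - (β.shift ε).comp α)
    (hc : ((j.shift ε).shift ε).comp c = Q.shiftHom₂ hε - (α.shift ε).comp β) :
    ((κ.shift ε).shift ε).comp d = (c.shift ε).comp α := by
  refine cancel_left (i := ((j.shift ε).shift ε).shift ε) (fun _ => hj _) ?_
  calc ((((j.shift ε).comp κ).shift ε).shift ε).comp d
      = ((α.shift ε).shift ε).comp (((i.shift ε).shift ε).comp d) := by rw [hκ]; rfl
    _ = ((Q.shiftHom₂ hε).shift ε).comp α - (((α.shift ε).comp β).shift ε).comp α := by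
      rw [hd, comp_sub, shift_shift_comp_shiftHom₂, ← PersMod.shiftHom₂_shift]; rfl
    _ = ((((j.shift ε).shift ε).comp c).shift ε).comp α := by rw [hc, shift_sub, sub_comp]

lemma shift_comp_add_comp_eq_shiftHom₂ (hj : ∀ r, Function.Injective (j.app r))
    {μ : PersHom L (K.shift ε)} (hκ : (j.shift ε).comp κ = α.comp i)
    (hμ : (i.shift ε).comp μ = β.comp j)
    (hc : ((j.shift ε).shift ε).comp c = Q.shiftHom₂ hε - (α.shift ε).comp β) :
    (κ.shift ε).comp μ + c.comp j = L.shiftHom₂ hε := by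
  refine cancel_left (i := (j.shift ε).shift ε) (fun _ => hj _) ?_
  calc ((j.shift ε).shift ε).comp ((κ.shift ε).comp μ + c.comp j)
      = (α.shift ε).comp ((i.shift ε).comp μ) + (((j.shift ε).shift ε).comp c).comp j := by
        rw [comp_add, ← comp_assoc, ← shift_comp, hκ]; rfl
    _ = ((j.shift ε).shift ε).comp (L.shiftHom₂ hε) := by
      rw [hμ, hc, sub_comp, shift_shift_comp_shiftHom₂, comp_assoc, add_sub_cancel]

lemma interleaved_dsum_shift (hi : ∀ r, Function.Injective (i.app r))
    (hj : ∀ r, Function.Injective (j.app r)) {d : PersHom P ((K.shift ε).shift ε)}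
    {μ : PersHom L (K.shift ε)}
    (hd : ((i.shift ε).shift ε).comp d = P.shiftHom₂ hε - (β.shift ε).comp α)
    (hc : ((j.shift ε).shift ε).comp c = Q.shiftHom₂ hε - (α.shift ε).comp β)
    (hκ : (j.shift ε).comp κ = α.comp i) (hμ : (i.shift ε).comp μ = β.comp j) :
    Interleaved ε (P.dsum (L.shift ε)) ((K.shift ε).dsum Q) := by
  refine interleaved_dsum_of_blocks hε (a := d) (b := μ.shift ε) (c := α) (d := -(j.shift ε))
    (a' := i.shift ε) (b' := β) (c' := κ.shift ε) (d' := -c) ?_ ?_ ?_ ?_ ?_ ?_ ?_ ?_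
  · rw [hd, sub_add_cancel]
  · rw [← shift_comp, hμ, comp_neg]
    exact add_neg_cancel _
  · rw [shift_shift_comp_eq_shift_comp hε hj hκ hd hc, shift_neg, neg_comp, add_neg_cancel]
  · rw [shift_neg, neg_comp, comp_neg, neg_neg, ← shift_comp, ← shift_comp, ← shift_add,
      shift_comp_add_comp_eq_shiftHom₂ hε hj hκ hμ hc, PersMod.shiftHom₂_shift]
  · rw [← shift_comp, ← shift_comp, ← shift_add, add_comm,
      shift_comp_add_comp_eq_shiftHom₂ hε hi hμ hκ hd, PersMod.shiftHom₂_shift]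
  · rw [comp_neg, shift_shift_comp_eq_shift_comp hε hi hμ hc hd, add_neg_cancel]
  · rw [← shift_comp, ← hκ, shift_neg, neg_comp]
    exact add_neg_cancel _
  · rw [shift_neg, neg_comp, comp_neg, neg_neg, hc, add_sub_cancel]

end Schanuel

/-- **Lemma 3.1** (persistent Schanuel's lemma).
Given short exact sequences `0 → K → P → M → 0` and `0 → L → Q → N → 0` with `P`, `Q`
projective, if `M` and `N` are `ε`-interleaved then so are `P ⊕ L[ε]` and `K[ε] ⊕ Q`. -/
theorem persistent_schanuel
    {k : Type} [Field k] {n : ℕ} (ε : ℝ)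
    (M N K L P Q : PersMod k n)
    (i : PersHom K P) (p : PersHom P M) (j : PersHom L Q) (q : PersHom Q N)
    (hi : ∀ r, Function.Injective (i.app r)) (hp : ∀ r, Function.Surjective (p.app r))
    (hip : ∀ r, LinearMap.range (i.app r) = LinearMap.ker (p.app r))
    (hj : ∀ r, Function.Injective (j.app r)) (hq : ∀ r, Function.Surjective (q.app r))
    (hjq : ∀ r, LinearMap.range (j.app r) = LinearMap.ker (q.app r))
    (hP : IsProjectiveMod P) (hQ : IsProjectiveMod Q)
    (hMN : Interleaved ε M N) :
    Interleaved ε (P.dsum (L.shift ε)) ((K.shift ε).dsum Q) := by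
  obtain ⟨hε, f, g, hgf, hfg⟩ := interleaved_iff.mp hMN
  have hK : IsShortExact i p := ⟨hi, hp, hip⟩
  have hL : IsShortExact j q := ⟨hj, hq, hjq⟩
  obtain ⟨α, hα⟩ := hP.exists_comp_eq (q.shift ε) (hL.shift ε).surjective (f.comp p)
  obtain ⟨β, hβ⟩ := hQ.exists_comp_eq (p.shift ε) (hK.shift ε).surjective (g.comp q)
  obtain ⟨d, hd⟩ := ((hK.shift ε).shift ε).exists_comp_eq
    (comp_shiftHom₂_sub_comp_eq_zero hε hgf hα hβ)
  obtain ⟨c, hc⟩ := ((hL.shift ε).shift ε).exists_comp_eq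
    (comp_shiftHom₂_sub_comp_eq_zero hε hfg hβ hα)
  obtain ⟨κ, hκ⟩ := (hL.shift ε).exists_comp_eq (h := α.comp i) <| by
    rw [← comp_assoc, hα, comp_assoc, hK.comp_eq_zero, comp_zero]
  obtain ⟨μ, hμ⟩ := (hK.shift ε).exists_comp_eq (h := β.comp j) <| by
    rw [← comp_assoc, hβ, comp_assoc, hL.comp_eq_zero, comp_zero]
  exact interleaved_dsum_shift hε hi hj hd hc hκ hμ

end
end

section
/- Triangle inequality for the signed 1-Wasserstein distance (Proposition 6.2(2)). For all finite n-dimensional signed barcodes B, C, and D, one has d̂_{W¹}(B, D) ≤ d̂_{W¹}(B, C) + d̂_{W¹}(C, D). -/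
set_option linter.unusedVariables false
set_option maxHeartbeats 800000

open scoped Classical ENNReal

noncomputable section

variable {k : Type} [Field k] {n : ℕ}

lemma l1dist_nonneg (x y : Pt n) : 0 ≤ l1dist x y :=
  Finset.sum_nonneg fun _ _ => abs_nonneg _

lemma l1dist_triangle (x y z : Pt n) : l1dist x z ≤ l1dist x y + l1dist y z := by
  rw [l1dist, l1dist, l1dist, ← Finset.sum_add_distrib]
  exact Finset.sum_le_sum fun i _ => abs_sub_le (x i) (y i) (z i)

lemma matchCost_nonneg (m : Multiset (Pt n × Pt n)) : 0 ≤ matchCost m :=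
  Multiset.sum_nonneg fun _ hx => by
    obtain ⟨p, -, rfl⟩ := Multiset.mem_map.1 hx
    exact l1dist_nonneg _ _

lemma matchCost_cons (p : Pt n × Pt n) (m : Multiset (Pt n × Pt n)) :
    matchCost (p ::ₘ m) = l1dist p.1 p.2 + matchCost m := by
  simp [matchCost]

lemma matchCost_add (m m' : Multiset (Pt n × Pt n)) :
    matchCost (m + m') = matchCost m + matchCost m' := by
  simp [matchCost]

/-- If `m` pairs `p.1` with `s` and `s` with `q.2`, replacing these two pairs by `(p.1, q.2)`
does not increase the cost, by the triangle inequality. -/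
lemma exists_matching_cancel_cons {m : Multiset (Pt n × Pt n)} {X Y : Multiset (Pt n)}
    {s : Pt n} (hfst : m.map Prod.fst = s ::ₘ X) (hsnd : m.map Prod.snd = s ::ₘ Y) :
    ∃ m' : Multiset (Pt n × Pt n),
      m'.map Prod.fst = X ∧ m'.map Prod.snd = Y ∧ matchCost m' ≤ matchCost m := by
  obtain ⟨p, hp, hps⟩ := Multiset.mem_map.1 (hsnd ▸ Multiset.mem_cons_self s Y)
  obtain ⟨m₀, rfl⟩ := Multiset.exists_cons_of_mem hp
  rw [Multiset.map_cons, hps, Multiset.cons_inj_right] at hsnd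
  rw [Multiset.map_cons] at hfst
  by_cases hp₁ : p.1 = s
  · rw [hp₁, Multiset.cons_inj_right] at hfst
    refine ⟨m₀, hfst, hsnd, ?_⟩
    rw [matchCost_cons]
    linarith [l1dist_nonneg p.1 p.2]
  · have hs : s ∈ m₀.map Prod.fst :=
      (Multiset.mem_cons.1 (hfst ▸ Multiset.mem_cons_self s X)).resolve_left (Ne.symm hp₁)
    obtain ⟨q, hq, hqs⟩ := Multiset.mem_map.1 hs
    obtain ⟨m₁, rfl⟩ := Multiset.exists_cons_of_mem hq
    rw [Multiset.map_cons, hqs, Multiset.cons_swap, Multiset.cons_inj_right] at hfst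
    rw [Multiset.map_cons] at hsnd
    refine ⟨(p.1, q.2) ::ₘ m₁, by simp [← hfst], by simp [← hsnd], ?_⟩
    simp only [matchCost_cons, hps, hqs]
    linarith [l1dist_triangle p.1 s q.2]

lemma exists_matching_cancel_add {m : Multiset (Pt n × Pt n)} {X Y S : Multiset (Pt n)}
    (hfst : m.map Prod.fst = X + S) (hsnd : m.map Prod.snd = Y + S) :
    ∃ m' : Multiset (Pt n × Pt n),
      m'.map Prod.fst = X ∧ m'.map Prod.snd = Y ∧ matchCost m' ≤ matchCost m := by
  induction S using Multiset.induction_on generalizing m with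
  | empty => exact ⟨m, by simpa using hfst, by simpa using hsnd, le_rfl⟩
  | cons s S ih =>
    rw [Multiset.add_cons] at hfst hsnd
    obtain ⟨m₁, hfst₁, hsnd₁, hcost₁⟩ := exists_matching_cancel_cons hfst hsnd
    obtain ⟨m', hfst', hsnd', hcost'⟩ := ih hfst₁ hsnd₁
    exact ⟨m', hfst', hsnd', hcost'.trans hcost₁⟩

lemma wassDist_le_matchCost {m : Multiset (Pt n × Pt n)} {X Y : Multiset (Pt n)}
    (hfst : m.map Prod.fst = X) (hsnd : m.map Prod.snd = Y) :
    wassDist X Y ≤ ENNReal.ofReal (matchCost m) :=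
  sInf_le ⟨m, hfst, hsnd, rfl⟩

lemma wassDist_le_wassDist_add (X Y S : Multiset (Pt n)) :
    wassDist X Y ≤ wassDist (X + S) (Y + S) := by
  refine le_sInf ?_
  rintro _ ⟨m, hfst, hsnd, rfl⟩
  obtain ⟨m', hfst', hsnd', hcost⟩ := exists_matching_cancel_add hfst hsnd
  exact (wassDist_le_matchCost hfst' hsnd').trans (ENNReal.ofReal_le_ofReal hcost)

lemma wassDist_add_add_le (X Y X' Y' : Multiset (Pt n)) :
    wassDist (X + X') (Y + Y') ≤ wassDist X Y + wassDist X' Y' := by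
  conv_rhs => rw [wassDist, wassDist, sInf_eq_iInf', sInf_eq_iInf']
  refine ENNReal.le_iInf_add_iInf fun ⟨_, m, hfst, hsnd, rfl⟩ ⟨_, m', hfst', hsnd', rfl⟩ => ?_
  rw [← ENNReal.ofReal_add (matchCost_nonneg m) (matchCost_nonneg m'), ← matchCost_add]
  exact wassDist_le_matchCost (by rw [Multiset.map_add, hfst, hfst'])
    (by rw [Multiset.map_add, hsnd, hsnd'])

/-- **Proposition 6.2(2).** The signed 1-Wasserstein distance satisfies the triangle
inequality. -/
theorem dW1hat_triangle {n : ℕ} (B C D : SignedBarcode n) :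
    dW1hat B D ≤ dW1hat B C + dW1hat C D :=
  calc dW1hat B D ≤ wassDist (B.1 + D.2 + (C.1 + C.2)) (D.1 + B.2 + (C.1 + C.2)) :=
        wassDist_le_wassDist_add _ _ _
    _ = wassDist ((B.1 + C.2) + (C.1 + D.2)) ((C.1 + B.2) + (D.1 + C.2)) := by
        congr 1 <;> abel
    _ ≤ dW1hat B C + dW1hat C D := wassDist_add_add_le _ _ _ _

end
end
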